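/- For density matrices ρ and σ, the maximum of Re(Tr(σ^{1/2} ρ^{1/2} U)) over all contractions U (‖U‖ ≤ 1) equals the fidelity F(ρ,σ) = Tr(√(σ^{1/2} ρ σ^{1/2})). -/

import Mathlib

open Matrix BigOperators Finset ComplexOrder

variable {d n : ℕ}

open Classical in
/-- The positive semidefinite square root (zero if not PSD). -/
noncomputable def psqrt (A : Matrix (Fin d) (Fin d) ℂ) : Matrix (Fin d) (Fin d) ℂ :=
  if h : A.PosSemidef then
    h.1.eigenvectorUnitary.1 * diagonal ((↑) ∘ (Real.sqrt ∘ h.1.eigenvalues)) *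
      (star h.1.eigenvectorUnitary : Matrix (Fin d) (Fin d) ℂ) else 0

/-- Trace norm ‖A‖₁ = Tr √(A*A). -/
noncomputable def traceNorm (A : Matrix (Fin d) (Fin d) ℂ) : ℝ :=
  ((psqrt (Aᴴ * A)).trace).re

/-- Fidelity F(ρ,σ) = Tr √(σ^{1/2} ρ σ^{1/2}). -/
noncomputable def fid (ρ σ : Matrix (Fin d) (Fin d) ℂ) : ℝ :=
  ((psqrt (psqrt σ * ρ * psqrt σ)).trace).re

/-- Density matrix: positive semidefinite with unit trace. -/
def IsDensity (ρ : Matrix (Fin d) (Fin d) ℂ) : Prop := ρ.PosSemidef ∧ ρ.trace = 1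

/-- Contraction: spectral norm at most one, i.e. 1 - UᴴU ⪰ 0. -/
def IsContraction (U : Matrix (Fin d) (Fin d) ℂ) : Prop := (1 - Uᴴ * U).PosSemidef

/-- Probability vector. -/
def IsProbVec (p : Fin n → ℝ) : Prop := (∀ i, 0 ≤ p i) ∧ ∑ i, p i = 1

/-!
With `M = A Aᴴ` for `A = σ^{1/2} ρ^{1/2}`, the fidelity is `Tr √M`, and the claim is that
`Re Tr (A U) ≤ Tr √M` for every contraction `U`, with equality at `U = Aᴴ M^{-1/2}`
(pseudo-inverse). For the bound, factor `A U` through `M^{1/4}`: since the range of `A` lies in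
that of `M`, `Tr (A U) = Tr ((M^{-1/4} A) (U M^{1/4}))`, and the inequality
`2 Re Tr (X Y) ≤ Tr (X Xᴴ) + Tr (Yᴴ Y)` bounds this by
`(Tr √M + Tr (M^{1/4} Uᴴ U M^{1/4})) / 2 ≤ Tr √M`.
-/

open scoped MatrixOrder

namespace Matrix

section

variable {k m n : Type*} [Fintype k] [Fintype m] [Fintype n]

lemma two_mul_re_trace_mul_le (X : Matrix m n ℂ) (Y : Matrix n m ℂ) :
    2 * (X * Y).trace.re ≤ (X * Xᴴ).trace.re + (Yᴴ * Y).trace.re := by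
  have h := (posSemidef_conjTranspose_mul_self (Xᴴ - Y)).trace_nonneg
  have hconj : (Yᴴ * Xᴴ).trace.re = (X * Y).trace.re := by
    rw [← conjTranspose_mul, trace_conjTranspose, Complex.star_def, Complex.conj_re]
  simp only [conjTranspose_sub, conjTranspose_conjTranspose, Matrix.sub_mul, Matrix.mul_sub,
    trace_sub] at h
  have h_re := (Complex.nonneg_iff.mp h).1
  simp only [Complex.sub_re] at h_re
  linarith

lemma re_trace_conjTranspose_mul_self_le [DecidableEq m] {U : Matrix k m ℂ} (hU : Uᴴ * U ≤ 1)
    (Q : Matrix m n ℂ) : ((U * Q)ᴴ * (U * Q)).trace.re ≤ (Qᴴ * Q).trace.re := by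
  have h := ((Matrix.le_iff.mp hU).conjTranspose_mul_mul_same Q).trace_nonneg
  rw [Matrix.mul_sub, Matrix.sub_mul, Matrix.mul_one, trace_sub, sub_nonneg] at h
  simpa only [conjTranspose_mul, Matrix.mul_assoc] using (Complex.le_def.mp h).1

end

variable {m n : Type*} [Fintype m] [Fintype n] [DecidableEq m]

lemma cfc_mul_cfc (f g : ℝ → ℝ) (A : Matrix m m ℂ) :
    cfc f A * cfc g A = cfc (fun x => f x * g x) A :=
  (cfc_mul f g A (A.finite_real_spectrum.continuousOn f)
    (A.finite_real_spectrum.continuousOn g)).symm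

lemma IsHermitian.mul_cfc {A : Matrix m m ℂ} (hA : A.IsHermitian) (f : ℝ → ℝ) :
    A * cfc f A = cfc (fun x => x * f x) A :=
  (congrArg (· * cfc f A) (cfc_id' ℝ A hA)).symm.trans (cfc_mul_cfc _ _ A)

lemma IsHermitian.cfc_mul {A : Matrix m m ℂ} (hA : A.IsHermitian) (f : ℝ → ℝ) :
    cfc f A * A = cfc (fun x => f x * x) A :=
  (congrArg (cfc f A * ·) (cfc_id' ℝ A hA)).symm.trans (cfc_mul_cfc _ _ A)

lemma conjTranspose_cfc (f : ℝ → ℝ) (A : Matrix m m ℂ) : (cfc f A)ᴴ = cfc f A :=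
  (cfc_predicate f A : IsSelfAdjoint _)

lemma exists_contraction_mul_eq_sqrt (A : Matrix m n ℂ) :
    ∃ U : Matrix n m ℂ, Uᴴ * U ≤ 1 ∧ A * U = CFC.sqrt (A * Aᴴ) := by
  have hM := posSemidef_self_mul_conjTranspose A
  -- `(√0)⁻¹ = 0`, so this is the pseudo-inverse of `√(A Aᴴ)`
  refine ⟨Aᴴ * cfc (fun x => (√x)⁻¹) (A * Aᴴ), ?_, ?_⟩
  · rw [conjTranspose_mul, conjTranspose_conjTranspose, conjTranspose_cfc, Matrix.mul_assoc,
      ← Matrix.mul_assoc A, hM.1.mul_cfc, cfc_mul_cfc]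
    refine cfc_le_one _ _ fun x _ => ?_
    rw [show (√x)⁻¹ * (x * (√x)⁻¹) = x / (√x * √x) by ring]
    rcases le_or_gt x 0 with hx | hx
    · simp [Real.sqrt_eq_zero'.mpr hx]
    · rw [Real.mul_self_sqrt hx.le, div_self hx.ne']
  · rw [← Matrix.mul_assoc, hM.1.mul_cfc, CFC.sqrt_eq_real_sqrt _ hM.nonneg, cfcₙ_eq_cfc]
    simp only [← div_eq_mul_inv, Real.div_sqrt]

lemma re_trace_mul_le_sqrt (A : Matrix m n ℂ) {U : Matrix n m ℂ} (hU : Uᴴ * U ≤ 1) :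
    (A * U).trace.re ≤ (CFC.sqrt (A * Aᴴ)).trace.re := by
  have hM := posSemidef_self_mul_conjTranspose A
  rw [CFC.sqrt_eq_real_sqrt _ hM.nonneg, cfcₙ_eq_cfc]
  set Q := cfc (fun x => √√x) (A * Aᴴ)
  set Q' := cfc (fun x => (√√x)⁻¹) (A * Aᴴ)
  have hQ : Qᴴ * Q = cfc Real.sqrt (A * Aᴴ) := by
    rw [conjTranspose_cfc, cfc_mul_cfc]
    simp only [Real.mul_self_sqrt (Real.sqrt_nonneg _)]
  have hQ'A : (Q' * A) * (Q' * A)ᴴ = cfc Real.sqrt (A * Aᴴ) := by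
    rw [conjTranspose_mul, conjTranspose_cfc, Matrix.mul_assoc, ← Matrix.mul_assoc A,
      hM.1.mul_cfc, cfc_mul_cfc]
    refine cfc_congr fun x _ => ?_
    rw [show (√√x)⁻¹ * (x * (√√x)⁻¹) = x / (√√x * √√x) by ring,
      Real.mul_self_sqrt (Real.sqrt_nonneg _), Real.div_sqrt]
  have hQQ'A : Q * Q' * A = A := by
    have h : (1 - Q * Q') * (A * Aᴴ) = 0 := by
      rw [sub_mul, Matrix.one_mul, sub_eq_zero, cfc_mul_cfc, hM.1.cfc_mul]
      conv_lhs => rw [← cfc_id' ℝ (A * Aᴴ) hM.1]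
      refine cfc_congr fun x hx => ?_
      rcases (spectrum_nonneg_of_nonneg hM.nonneg hx).eq_or_lt with rfl | hx
      · simp
      · rw [mul_inv_cancel₀ (by positivity), one_mul]
    rw [mul_self_mul_conjTranspose_eq_zero, Matrix.sub_mul, Matrix.one_mul, sub_eq_zero] at h
    exact h.symm
  have htrace : (A * U).trace = ((Q' * A) * (U * Q)).trace :=
    calc (A * U).trace = (Q * (Q' * A * U)).trace := by
          rw [← Matrix.mul_assoc, ← Matrix.mul_assoc, hQQ'A]
      _ = _ := by rw [trace_mul_comm, Matrix.mul_assoc]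
  have hAMGM := two_mul_re_trace_mul_le (Q' * A) (U * Q)
  have hU' := re_trace_conjTranspose_mul_self_le hU Q
  rw [← htrace, hQ'A] at hAMGM
  rw [hQ] at hU'
  linarith

theorem isGreatest_re_trace_mul_contraction (A : Matrix m n ℂ) :
    IsGreatest {x : ℝ | ∃ U : Matrix n m ℂ, Uᴴ * U ≤ 1 ∧ x = (A * U).trace.re}
      (CFC.sqrt (A * Aᴴ)).trace.re := by
  refine ⟨?_, fun x ⟨U, hU, hx⟩ => hx ▸ re_trace_mul_le_sqrt A hU⟩
  obtain ⟨U, hU, hAU⟩ := exists_contraction_mul_eq_sqrt A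
  exact ⟨U, hU, by rw [hAU]⟩

end Matrix

lemma psqrt_eq_sqrt {A : Matrix (Fin d) (Fin d) ℂ} (hA : A.PosSemidef) :
    psqrt A = CFC.sqrt A := by
  rw [CFC.sqrt_eq_real_sqrt A hA.nonneg, cfcₙ_eq_cfc, hA.1.cfc_eq, psqrt, dif_pos hA]
  rfl

/-- The maximum of Re Tr(σ^{1/2} ρ^{1/2} U) over contractions U equals F(ρ,σ). -/
theorem fidelity_eq_max_re_trace (ρ σ : Matrix (Fin d) (Fin d) ℂ)
    (hρ : IsDensity ρ) (hσ : IsDensity σ) :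
    IsGreatest {x : ℝ | ∃ U : Matrix (Fin d) (Fin d) ℂ,
      IsContraction U ∧ x = ((psqrt σ * psqrt ρ * U).trace).re} (fid ρ σ) := by
  have hA : (psqrt σ * psqrt ρ) * (psqrt σ * psqrt ρ)ᴴ = psqrt σ * ρ * psqrt σ := by
    rw [psqrt_eq_sqrt hρ.1, psqrt_eq_sqrt hσ.1, conjTranspose_mul,
      (CFC.sqrt_nonneg ρ).isSelfAdjoint.isHermitian.eq,
      (CFC.sqrt_nonneg σ).isSelfAdjoint.isHermitian.eq, mul_assoc, ← mul_assoc (CFC.sqrt ρ),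
      CFC.sqrt_mul_sqrt_self ρ hρ.1.nonneg, mul_assoc]
  rw [fid, ← hA, psqrt_eq_sqrt (posSemidef_self_mul_conjTranspose _)]
  exact isGreatest_re_trace_mul_contraction _
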